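/- arXiv:1111.4707 — 9 statements merged into one kernel-verified Lean document; each statement's English description precedes it below -/
import Mathlib

section
/- Let R be a commutative ring, S a commutative R-algebra, a ∈ R, and write σ = algebraMap R S a for the image of a in S. Let 0 → E →g F →h E → 0 be a short exact sequence of S-modules (g injective S-linear, h surjective S-linear, range g = ker h). Suppose l ∈ ℕ is such that σ^l • x = 0 for every x ∈ E, while there exists y ∈ F with σ^(l+1) • y ≠ 0. Then, regarding E and F as R-modules by restriction of scalars along R → S, the sequence does not split over R: there is no R-linear map s : E → F with h ∘ s = id on E. -/
/-! A section `s` of `h` gives `F = s(E) + g(E)`. If `c ∈ R` kills `E`, it kills `s(E)` because `s`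
is `R`-linear and `g(E)` because `g` is `S`-linear, so it kills all of `F`. Taking `c = a ^ l`,
a splitting over `R` would force `σ ^ l`, and hence `σ ^ (l + 1)`, to kill `F`. -/

theorem LinearMap.exists_eq_add_of_rightInverse {R E F : Type*} [Ring R]
    [AddCommGroup E] [AddCommGroup F] [Module R E] [Module R F]
    {g : E →ₗ[R] F} {h : F →ₗ[R] E} (hexact : LinearMap.range g = LinearMap.ker h)
    {s : E → F} (hs : ∀ x, h (s x) = x) (y : F) : ∃ x e, y = s x + g e := by
  have hker : y - s (h y) ∈ LinearMap.range g := by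
    simp [hexact, hs]
  obtain ⟨e, he⟩ := hker
  exact ⟨h y, e, by rw [he]; abel⟩

theorem algebraMap_smul_eq_zero_of_rightInverse {R S : Type*} [CommRing R] [CommRing S]
    [Algebra R S] {E F : Type*} [AddCommGroup E] [AddCommGroup F]
    [Module S E] [Module S F] [Module R E] [Module R F]
    [IsScalarTower R S E] [IsScalarTower R S F]
    {g : E →ₗ[S] F} {h : F →ₗ[S] E} (hexact : LinearMap.range g = LinearMap.ker h)
    {s : E →ₗ[R] F} (hs : ∀ x, h (s x) = x)
    {c : R} (hE : ∀ x : E, algebraMap R S c • x = 0) (y : F) :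
    algebraMap R S c • y = 0 := by
  obtain ⟨x, e, rfl⟩ := LinearMap.exists_eq_add_of_rightInverse hexact hs y
  rw [smul_add, algebraMap_smul, ← map_smul, ← algebraMap_smul S, hE, ← map_smul, hE,
    map_zero, map_zero, add_zero]

theorem stmt_1_general {R S : Type*} [CommRing R] [CommRing S] [Algebra R S] (a : R)
    {E F : Type*} [AddCommGroup E] [AddCommGroup F]
    [Module S E] [Module S F] [Module R E] [Module R F]
    [IsScalarTower R S E] [IsScalarTower R S F]
    (g : E →ₗ[S] F) (h : F →ₗ[S] E)
    (hexact : LinearMap.range g = LinearMap.ker h)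
    (l : ℕ)
    (hE : ∀ x : E, (algebraMap R S a) ^ l • x = 0)
    (hF : ∃ y : F, (algebraMap R S a) ^ (l + 1) • y ≠ 0) :
    ¬ ∃ s : E →ₗ[R] F, ∀ x : E, h (s x) = x := by
  rintro ⟨s, hs⟩
  obtain ⟨y, hy⟩ := hF
  have hF_killed : ∀ y : F, algebraMap R S (a ^ l) • y = 0 :=
    algebraMap_smul_eq_zero_of_rightInverse hexact hs (by simpa only [map_pow] using hE)
  rw [map_pow] at hF_killed
  exact hy (by rw [pow_succ', mul_smul, hF_killed, smul_zero])

/-- Corollary 2.5 (push-forward of jet), algebraic form: a short exact sequence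
`0 → E → F → E → 0` of `S`-modules such that `σ^l = (algebraMap R S a)^l` kills `E`
while `σ^(l+1)` does not kill `F` does not split over `R` (restriction of scalars). -/
theorem stmt_1 {R S : Type*} [CommRing R] [CommRing S] [Algebra R S] (a : R)
    {E F : Type*} [AddCommGroup E] [AddCommGroup F]
    [Module S E] [Module S F] [Module R E] [Module R F]
    [IsScalarTower R S E] [IsScalarTower R S F]
    (g : E →ₗ[S] F) (h : F →ₗ[S] E)
    (hg : Function.Injective g) (hh : Function.Surjective h)
    (hexact : LinearMap.range g = LinearMap.ker h)
    (l : ℕ)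
    (hE : ∀ x : E, (algebraMap R S a) ^ l • x = 0)
    (hF : ∃ y : F, (algebraMap R S a) ^ (l + 1) • y ≠ 0) :
    ¬ ∃ s : E →ₗ[R] F, ∀ x : E, h (s x) = x :=
  stmt_1_general a g h hexact l hE hF
end

section
/- Let K be a field and B a discrete valuation ring that is a commutative K-algebra, with uniformizer u (i.e. u is an irreducible element of B). Let n ≥ 1 and l ≥ 0 be natural numbers. Then for every polynomial h ∈ K[X]: the evaluation of h at u^n (i.e. aeval (u^n) h ∈ B) lies in the ideal of B generated by u^(n·l) if and only if h lies in the ideal of K[X] generated by X^l. -/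
/-!
Write `h = X ^ k * g` with `X ∤ g`. In a local ring, `g(m)` is a unit whenever `m` is a nonunit,
since it differs from the nonzero constant `g(0)` by a multiple of `m`. So `h(m) = m ^ k * unit`,
and `m ^ l ∣ h(m)` becomes `l ≤ k`, which is `X ^ l ∣ h`. Apply this to `m = u ^ n`.
-/

open Polynomial IsLocalRing

namespace Polynomial

variable {K B : Type*} [Field K] [CommRing B] [Algebra K B]

theorem isUnit_aeval_of_not_X_dvd [IsLocalRing B] {m : B} (hm : ¬IsUnit m) {g : K[X]}
    (hg : ¬X ∣ g) : IsUnit (aeval m g) := by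
  have hc : IsUnit (algebraMap K B (g.coeff 0)) :=
    (isUnit_iff_ne_zero.2 (mt X_dvd_iff.2 hg)).map _
  obtain ⟨q, hq⟩ : X ∣ g - C (g.coeff 0) := X_dvd_sub_C
  have hsplit : algebraMap K B (g.coeff 0) = aeval m g - m * aeval m q := by
    have := congrArg (aeval m) hq
    simp only [map_sub, map_mul, aeval_X, aeval_C] at this
    linear_combination -this
  by_contra hg'
  refine (mem_maximalIdeal _).1 ?_ hc
  rw [hsplit]
  exact sub_mem ((mem_maximalIdeal _).2 hg') (Ideal.mul_mem_right _ _ ((mem_maximalIdeal _).2 hm))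

theorem exists_isUnit_aeval_eq_pow_rootMultiplicity_mul [IsLocalRing B] {m : B}
    (hm : ¬IsUnit m) {h : K[X]} (h0 : h ≠ 0) :
    ∃ v : B, IsUnit v ∧ aeval m h = m ^ h.rootMultiplicity 0 * v := by
  obtain ⟨g, hg, hXg⟩ := exists_eq_pow_rootMultiplicity_mul_and_not_dvd h h0 0
  rw [C_0, sub_zero] at hg hXg
  refine ⟨aeval m g, isUnit_aeval_of_not_X_dvd hm hXg, ?_⟩
  conv_lhs => rw [hg]
  rw [map_mul, map_pow, aeval_X]

theorem pow_dvd_aeval_self_iff [IsDomain B] [IsLocalRing B] {m : B} (hm0 : m ≠ 0)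
    (hm : ¬IsUnit m) (h : K[X]) (l : ℕ) : m ^ l ∣ aeval m h ↔ X ^ l ∣ h := by
  rcases eq_or_ne h 0 with rfl | h0
  · simp
  obtain ⟨v, hv, hmh⟩ := exists_isUnit_aeval_eq_pow_rootMultiplicity_mul hm h0
  rw [hmh, hv.dvd_mul_right, pow_dvd_pow_iff hm0 hm, le_rootMultiplicity_iff h0, C_0, sub_zero]

end Polynomial

/-- Identification of the polynomials in `u^n` lying in `(u^(n·l))` in a DVR `B`
with uniformizer `u` (proof of Lemma 2.7): `h(u^n) ∈ (u^(n·l))` iff `h ∈ (X^l)`. -/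
theorem stmt_5 {K B : Type*} [Field K] [CommRing B] [IsDomain B]
    [IsDiscreteValuationRing B] [Algebra K B]
    (u : B) (hu : Irreducible u) (n l : ℕ) (hn : 1 ≤ n) :
    ∀ h : K[X],
      aeval (u ^ n) h ∈ Ideal.span {u ^ (n * l)} ↔ h ∈ Ideal.span {(X : K[X]) ^ l} := by
  intro h
  have hun : ¬IsUnit (u ^ n) := by
    rw [isUnit_pow_iff (by omega)]
    exact hu.not_isUnit
  rw [Ideal.mem_span_singleton, Ideal.mem_span_singleton, pow_mul]
  exact pow_dvd_aeval_self_iff (pow_ne_zero n hu.ne_zero) hun h l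
end

section
/- Let K be a field, A and B commutative K-algebras with B a discrete valuation ring with uniformizer u, and let φ : A → B be a K-algebra homomorphism. Suppose f ∈ A and n ≥ 1 satisfy φ(f) = u^n. For l ≥ 1, let F be the B-module B ⧸ (u^(n·l)) regarded as an A-module via φ. Then the images of 1, f, …, f^(l−1) in A ⧸ Ann_A(F) are linearly independent over K, where Ann_A(F) = {a ∈ A : a • z = 0 for all z ∈ F}; in particular the K-dimension of A ⧸ Ann_A(F) is at least l. -/
/-!
With `v = u ^ n`, the map `φ` induces a `K`-linear map `A ⧸ I → B ⧸ (v ^ l)` sending `f ^ i`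
to `v ^ i`, so it suffices that `1, v, …, v ^ (l - 1)` are independent modulo `v ^ l`. A nonzero
`p : K[X]` factors as `X ^ m * q` with `q.coeff 0 ≠ 0`; as `v` lies in the maximal ideal of the
local ring `B`, `q(v)` is a unit and `p(v)` is associated to `v ^ m` with `m ≤ deg p`. Hence
`v ^ l ∣ p(v)` forces `l ≤ deg p`, so the minimal polynomial of `v` modulo `v ^ l` has degree
at least `l`.
-/

open Polynomial IsLocalRing

section

variable {K B : Type*} [Field K] [CommRing B] [Algebra K B]

theorem isUnit_aeval_of_coeff_zero_ne_zero [IsLocalRing B] {v : B} (hv : ¬IsUnit v)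
    {q : K[X]} (hq : q.coeff 0 ≠ 0) : IsUnit (aeval v q) := by
  obtain ⟨r, hr⟩ := X_dvd_sub_C (p := q)
  have hsplit : algebraMap K B (q.coeff 0) = aeval v q + -(v * aeval v r) := by
    have := congrArg (aeval v) hr
    rw [map_sub, aeval_C, map_mul, aeval_X] at this
    rw [← this]
    ring
  have hunit : IsUnit (algebraMap K B (q.coeff 0)) := hq.isUnit.map _
  rw [hsplit] at hunit
  refine (isUnit_or_isUnit_of_isUnit_add hunit).resolve_right fun h => hv ?_
  exact isUnit_of_mul_isUnit_left ((IsUnit.neg_iff _).mp h)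

theorem exists_le_natDegree_associated_pow_aeval [IsLocalRing B] {v : B} (hv : ¬IsUnit v)
    {p : K[X]} (hp : p ≠ 0) :
    ∃ m ≤ p.natDegree, Associated (v ^ m) (aeval v p) := by
  obtain ⟨q, hpq, hq⟩ := exists_eq_pow_rootMultiplicity_mul_and_not_dvd p hp 0
  rw [map_zero, sub_zero] at hpq hq
  rw [X_dvd_iff] at hq
  refine ⟨p.rootMultiplicity 0, ?_, ?_⟩
  · exact (natDegree_X_pow _).symm.trans_le (natDegree_le_of_dvd ⟨q, hpq⟩ hp)
  · conv_rhs => rw [hpq]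
    rw [map_mul, map_pow, aeval_X]
    exact ⟨(isUnit_aeval_of_coeff_zero_ne_zero hv hq).unit, rfl⟩

variable [IsDomain B] [IsLocalRing B] {v : B}

theorem le_natDegree_of_pow_dvd_aeval (hv₀ : v ≠ 0) (hv : ¬IsUnit v) {l : ℕ} {p : K[X]}
    (hp : p ≠ 0) (hdvd : v ^ l ∣ aeval v p) : l ≤ p.natDegree := by
  obtain ⟨m, hm, hassoc⟩ := exists_le_natDegree_associated_pow_aeval hv hp
  exact ((pow_dvd_pow_iff hv₀ hv).mp (hassoc.dvd_iff_dvd_right.mpr hdvd)).trans hm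

theorem le_natDegree_minpoly_mk_span_pow (hv₀ : v ≠ 0) (hv : ¬IsUnit v) (l : ℕ) :
    l ≤ (minpoly K (Ideal.Quotient.mk (Ideal.span {v ^ l}) v)).natDegree := by
  set x := Ideal.Quotient.mk (Ideal.span {v ^ l}) v
  have hx : x ^ l = 0 := by
    rw [← map_pow, Ideal.Quotient.eq_zero_iff_mem]
    exact Ideal.mem_span_singleton_self _
  have hint : IsIntegral K x := ⟨X ^ l, monic_X_pow l, by simp [hx]⟩
  refine le_natDegree_of_pow_dvd_aeval hv₀ hv (minpoly.ne_zero hint) ?_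
  rw [← Ideal.mem_span_singleton, ← Ideal.Quotient.eq_zero_iff_mem,
    ← Ideal.Quotient.mkₐ_eq_mk K, ← aeval_algHom_apply]
  exact minpoly.aeval K x

theorem linearIndependent_pow_mk_span_pow (hv₀ : v ≠ 0) (hv : ¬IsUnit v) (l : ℕ) :
    LinearIndependent K fun i : Fin l => Ideal.Quotient.mk (Ideal.span {v ^ l}) v ^ (i : ℕ) :=
  (linearIndependent_pow _).comp (Fin.castLE (le_natDegree_minpoly_mk_span_pow hv₀ hv l))
    (Fin.castLE_injective _)

end

theorem Ideal.eq_comap_of_mem_iff_forall_smul_eq_zero {A B F : Type*} [CommRing A] [CommRing B]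
    [FunLike F A B] [RingHomClass F A B] {φ : F} {J : Ideal B} {I : Ideal A}
    (hI : ∀ a : A, a ∈ I ↔ ∀ z : B ⧸ J, φ a • z = 0) : I = J.comap φ := by
  ext a
  rw [hI, Ideal.mem_comap, ← Module.mem_annihilator, Ideal.annihilator_quotient]

theorem stmt_6_general {K A B : Type*} [Field K] [CommRing A] [Algebra K A]
    [CommRing B] [IsDomain B] [IsDiscreteValuationRing B] [Algebra K B]
    (u : B) (hu : Irreducible u)
    (φ : A →ₐ[K] B) (f : A) (n : ℕ) (hn : 1 ≤ n) (hf : φ f = u ^ n)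
    (l : ℕ)
    (I : Ideal A)
    (hI : ∀ a : A, a ∈ I ↔
      ∀ z : B ⧸ Ideal.span {u ^ (n * l)}, φ a • z = 0) :
    LinearIndependent K (fun i : Fin l => Ideal.Quotient.mk I (f ^ (i : ℕ))) ∧
      (l : Cardinal) ≤ Module.rank K (A ⧸ I) := by
  suffices hindep : LinearIndependent K (fun i : Fin l => Ideal.Quotient.mk I (f ^ (i : ℕ))) from
    ⟨hindep, by simpa using hindep.cardinal_lift_le_rank⟩
  rw [pow_mul] at hI
  have hIJ := Ideal.eq_comap_of_mem_iff_forall_smul_eq_zero hI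
  have hv : ¬IsUnit (u ^ n) := by
    simpa [isUnit_pow_iff (by omega : n ≠ 0)] using hu.not_isUnit
  refine .of_comp (Ideal.quotientMapₐ _ φ hIJ.le).toLinearMap ?_
  convert linearIndependent_pow_mk_span_pow (K := K) (pow_ne_zero n hu.ne_zero) hv l using 1
  · ext i
    simp only [Function.comp_apply, AlgHom.toLinearMap_apply, map_pow]
    exact congrArg (· ^ (i : ℕ)) (congrArg (Ideal.Quotient.mk _) hf)
  -- `convert` also asks to identify `Algebra.toModule` on `B ⧸ J` with the quotient module.
  all_goals rfl

/-- Algebraic form of Lemma 2.7: for a `K`-algebra map `φ : A → B` to a DVR `B` with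
uniformizer `u` and `φ f = u^n`, the module `F = B ⧸ (u^(n·l))`, viewed as an
`A`-module via `φ`, has the images of `1, f, …, f^(l-1)` linearly independent over `K`
in `A ⧸ Ann_A(F)`; in particular `dim_K (A ⧸ Ann_A(F)) ≥ l`. -/
theorem stmt_6 {K A B : Type*} [Field K] [CommRing A] [Algebra K A]
    [CommRing B] [IsDomain B] [IsDiscreteValuationRing B] [Algebra K B]
    (u : B) (hu : Irreducible u)
    (φ : A →ₐ[K] B) (f : A) (n : ℕ) (hn : 1 ≤ n) (hf : φ f = u ^ n)
    (l : ℕ) (hl : 1 ≤ l)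
    (I : Ideal A)
    (hI : ∀ a : A, a ∈ I ↔
      ∀ z : B ⧸ Ideal.span {u ^ (n * l)}, φ a • z = 0) :
    LinearIndependent K (fun i : Fin l => Ideal.Quotient.mk I (f ^ (i : ℕ))) ∧
      (l : Cardinal) ≤ Module.rank K (A ⧸ I) :=
  stmt_6_general u hu φ f n hn hf l I hI
end

section
/- In the polynomial ring ℂ[x,y] in two variables over ℂ, for every natural number r ≥ 1, the element y^r − r·x·y^(r−1) lies in the ideal generated by (x − y)^r and x². -/
/-!
Modulo `x²` the binomial expansion of `(y - x)^r` stops after its linear term, so there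
`y^r - r x y^(r-1) = (y - x)^r = (-1)^r (x - y)^r`, which vanishes modulo `(x - y)^r`.
-/

open MvPolynomial

theorem add_pow_of_sq_eq_zero {R : Type*} [CommSemiring R] (x : R) {ε : R} (hε : ε ^ 2 = 0)
    (n : ℕ) : (x + ε) ^ n = x ^ n + n * x ^ (n - 1) * ε := by
  simpa [Polynomial.derivative_X_pow] using Polynomial.eval_add_of_sq_eq_zero (Polynomial.X ^ n) x ε hε

theorem pow_sub_natCast_mul_mul_pow_pred_mem_span {R : Type*} [CommRing R] (a b : R) (r : ℕ) :
    b ^ r - r * a * b ^ (r - 1) ∈ Ideal.span {(a - b) ^ r, a ^ 2} := by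
  set I := Ideal.span {(a - b) ^ r, a ^ 2}
  rw [← Ideal.Quotient.eq_zero_iff_mem]
  have ha : (Ideal.Quotient.mk I a) ^ 2 = 0 := by
    rw [← map_pow, Ideal.Quotient.eq_zero_iff_mem]
    exact Ideal.subset_span (by simp)
  have hba : (Ideal.Quotient.mk I b - Ideal.Quotient.mk I a) ^ r = 0 := by
    rw [← neg_sub, neg_pow, ← map_sub, ← map_pow, Ideal.Quotient.eq_zero_iff_mem.2
      (Ideal.subset_span (by simp)), mul_zero]
  have hexp := add_pow_of_sq_eq_zero (Ideal.Quotient.mk I b) (by rwa [neg_sq]) r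
  simp only [map_sub, map_mul, map_pow, map_natCast]
  linear_combination hba - hexp

theorem stmt_8_general (r : ℕ) :
    (X 1 : MvPolynomial (Fin 2) ℂ) ^ r
        - (r : MvPolynomial (Fin 2) ℂ) * X 0 * X 1 ^ (r - 1) ∈
      Ideal.span {((X 0 : MvPolynomial (Fin 2) ℂ) - X 1) ^ r,
        (X 0 : MvPolynomial (Fin 2) ℂ) ^ 2} :=
  pow_sub_natCast_mul_mul_pow_pred_mem_span _ _ r

/-- Key binomial computation in Step (a) of the proof of Proposition 2.1: in `ℂ[x,y]`,
`y^r − r·x·y^(r−1) ∈ ((x−y)^r, x²)`. -/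
theorem stmt_8 (r : ℕ) (hr : 1 ≤ r) :
    (X 1 : MvPolynomial (Fin 2) ℂ) ^ r
        - (r : MvPolynomial (Fin 2) ℂ) * X 0 * X 1 ^ (r - 1) ∈
      Ideal.span {((X 0 : MvPolynomial (Fin 2) ℂ) - X 1) ^ r,
        (X 0 : MvPolynomial (Fin 2) ℂ) ^ 2} :=
  stmt_8_general r
end

section
/- In the polynomial ring ℂ[x,y] in two variables over ℂ, let r ≥ 1 and l ∈ ℕ. Then y^l lies in the ideal generated by (x − y)^r and x² if and only if l ≥ r + 1. -/
/-!
Write `x, y` for `X 0, X 1`. Expanding `y ^ (r + 1) = (x - (x - y)) ^ (r + 1)` binomially, every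
term contains `x ^ 2` or `(x - y) ^ r`. Conversely, the substitution `x ↦ ε, y ↦ ε - t` into the
dual numbers over `R[t]` maps the ideal into `(t ^ r)` and `y ^ l` to `(-t) ^ l + l (-t) ^ (l - 1) ε`.
Both components must then be divisible by `t ^ r`; the first gives `l ≥ r ≥ 1`, so `l ≠ 0` in
characteristic zero, and the second then gives `l - 1 ≥ r`.
-/

open MvPolynomial

theorem pow_mem_span_sub_pow_sq_of_le {R : Type*} [CommRing R] (x y : R) {r l : ℕ}
    (h : r + 1 ≤ l) : y ^ l ∈ Ideal.span {(x - y) ^ r, x ^ 2} := by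
  have hx : x ^ 2 ∈ Ideal.span {(x - y) ^ r, x ^ 2} :=
    Ideal.subset_span (Set.mem_insert_of_mem _ rfl)
  have hxy : (-(x - y)) ^ r ∈ Ideal.span {(x - y) ^ r, x ^ 2} := by
    rw [neg_pow]
    exact Ideal.mul_mem_left _ _ (Ideal.subset_span (Set.mem_insert _ _))
  -- `y = x + (-(x - y))`, and the exponents `2` and `r` add up to `(r + 1) + 1`
  have hy : y ^ (r + 1) ∈ Ideal.span {(x - y) ^ r, x ^ 2} := by
    simpa using Ideal.add_pow_mem_of_pow_mem_of_le _ hx hxy (by omega)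
  exact Ideal.pow_mem_of_pow_mem _ hy h

theorem Polynomial.le_of_X_pow_dvd_C_mul_X_pow {R : Type*} [CommSemiring R] {a : R} {r n : ℕ}
    (ha : a ≠ 0) (h : Polynomial.X ^ r ∣ Polynomial.C a * Polynomial.X ^ n) : r ≤ n := by
  by_contra! hnr
  exact ha (by simpa using Polynomial.X_pow_dvd_iff.mp h n hnr)

theorem TrivSqZeroExt.dvd_fst_and_dvd_snd_of_mem_span_inl {R : Type*} [CommRing R] {a : R}
    {w : TrivSqZeroExt R R} (h : w ∈ Ideal.span {TrivSqZeroExt.inl a}) :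
    a ∣ w.fst ∧ a ∣ w.snd := by
  obtain ⟨c, rfl⟩ := Ideal.mem_span_singleton'.mp h
  exact ⟨⟨c.fst, by simp [mul_comm]⟩, ⟨c.snd, by simp [mul_comm]⟩⟩

theorem le_of_pow_mem_span_sub_pow_sq {R : Type*} [CommRing R] [CharZero R] {r l : ℕ}
    (hr : 1 ≤ r)
    (h : (X 1 : MvPolynomial (Fin 2) R) ^ l ∈ Ideal.span {(X 0 - X 1) ^ r, X 0 ^ 2}) :
    r + 1 ≤ l := by
  let φ : MvPolynomial (Fin 2) R →ₐ[R] DualNumber (Polynomial R) :=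
    aeval ![DualNumber.eps, DualNumber.eps - TrivSqZeroExt.inl Polynomial.X]
  have hφ : Ideal.span {(X 0 - X 1) ^ r, X 0 ^ 2} ≤
      (Ideal.span {TrivSqZeroExt.inl (Polynomial.X ^ r)}).comap φ := by
    rw [Ideal.span_le, Set.insert_subset_iff, Set.singleton_subset_iff]
    refine ⟨Ideal.subset_span ?_, by simp [φ, sq]⟩
    simp [φ, TrivSqZeroExt.inl_pow]
  obtain ⟨hfst, hsnd⟩ := TrivSqZeroExt.dvd_fst_and_dvd_snd_of_mem_span_inl (hφ h)
  have hy : φ (X 1) = DualNumber.eps - TrivSqZeroExt.inl Polynomial.X := by simp [φ]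
  have hfst_eq : (φ (X 1 ^ l)).fst = Polynomial.C ((-1) ^ l) * Polynomial.X ^ l := by
    simp only [map_pow, hy, TrivSqZeroExt.fst_pow, TrivSqZeroExt.fst_sub, DualNumber.fst_eps,
      TrivSqZeroExt.fst_inl, map_neg, map_one]
    ring
  have hsnd_eq : (φ (X 1 ^ l)).snd =
      Polynomial.C ((l : R) * (-1) ^ (l - 1)) * Polynomial.X ^ (l - 1) := by
    simp only [map_pow, hy, TrivSqZeroExt.snd_pow, TrivSqZeroExt.fst_sub, TrivSqZeroExt.snd_sub,
      DualNumber.fst_eps, DualNumber.snd_eps, TrivSqZeroExt.fst_inl, TrivSqZeroExt.snd_inl,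
      Nat.pred_eq_sub_one, smul_eq_mul, nsmul_eq_mul, map_mul, map_natCast, map_neg, map_one]
    ring
  rw [hfst_eq] at hfst
  rw [hsnd_eq] at hsnd
  have hsign : ∀ k : ℕ, IsUnit ((-1 : R) ^ k) := fun k => isUnit_one.neg.pow k
  have hrl := Polynomial.le_of_X_pow_dvd_C_mul_X_pow (hsign l).ne_zero hfst
  have hl : (l : R) ≠ 0 := Nat.cast_ne_zero.mpr (by omega)
  have := Polynomial.le_of_X_pow_dvd_C_mul_X_pow
    (((hsign (l - 1)).mul_left_eq_zero).not.mpr hl) hsnd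
  omega

/-- Step (a) of the proof of Proposition 2.1: in `ℂ[x,y]`,
`y^l ∈ ((x−y)^r, x²)` iff `l ≥ r + 1`. -/
theorem stmt_9 (r l : ℕ) (hr : 1 ≤ r) :
    (X 1 : MvPolynomial (Fin 2) ℂ) ^ l ∈
        Ideal.span {((X 0 : MvPolynomial (Fin 2) ℂ) - X 1) ^ r,
          (X 0 : MvPolynomial (Fin 2) ℂ) ^ 2}
      ↔ r + 1 ≤ l :=
  ⟨le_of_pow_mem_span_sub_pow_sq hr, pow_mem_span_sub_pow_sq_of_le _ _⟩
end

section
/- Let r ≥ 1, let A = ℂ[x,y] be the polynomial ring in two variables over ℂ, let I be the ideal generated by (x−y)^r and x, and let J be the ideal generated by (x−y)^r and x² (so J ⊆ I). Then: (i) multiplication by x induces a well-defined A-linear map μ : A/I → A/J sending the class of a to the class of x·a; (ii) μ is injective; and (iii) the range of μ equals the kernel of the natural projection q : A/J → A/I. In other words, 0 → A/I →μ A/J →q A/I → 0 is a short exact sequence of A-modules. -/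
open MvPolynomial

/-!
Write `I = (g, x)` and `J = (g, x²)`. Since `x · (u g + v x) = (x u) g + v x²`, multiplication by
`x` maps `I` into `J`. Conversely, if `x a = u g + v x²` with `x` prime and `x ∤ g`, then `x ∣ u`,
and cancelling `x` gives `a ∈ I`; this is injectivity. Finally `a = u g + v x ∈ I` is congruent to
`x v` modulo `J`, so the kernel of `R/J → R/I` is exactly the image of multiplication by `x`.
For `R = ℂ[x, y]`, `x = X 0` is prime and does not divide `g = (X 0 - X 1)^r`.
-/

namespace Ideal

variable {R : Type*} [CommRing R] {g x a : R}

theorem span_pair_sq_le_span_pair : span {g, x ^ 2} ≤ span {g, x} := by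
  rw [span_le]
  rintro p (rfl | rfl)
  · exact subset_span (Set.mem_insert _ _)
  · rw [sq]
    exact mul_mem_left _ _ (subset_span (Set.mem_insert_of_mem _ rfl))

theorem mul_mem_span_pair_sq_of_mem (ha : a ∈ span {g, x}) : x * a ∈ span {g, x ^ 2} := by
  obtain ⟨u, v, rfl⟩ := mem_span_pair.mp ha
  exact mem_span_pair.mpr ⟨x * u, v, by ring⟩

theorem exists_mul_sub_mem_span_pair_sq_of_mem (ha : a ∈ span {g, x}) :
    ∃ v, x * v - a ∈ span {g, x ^ 2} := by
  obtain ⟨u, v, rfl⟩ := mem_span_pair.mp ha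
  exact ⟨v, mem_span_pair.mpr ⟨-u, 0, by ring⟩⟩

theorem mem_span_pair_of_mul_mem_span_pair_sq [IsDomain R] (hx : Prime x) (hg : ¬x ∣ g)
    (ha : x * a ∈ span {g, x ^ 2}) : a ∈ span {g, x} := by
  obtain ⟨u, v, huv⟩ := mem_span_pair.mp ha
  have hxu : x ∣ u := by
    have : x ∣ u * g := ⟨a - v * x, by linear_combination huv⟩
    exact (hx.dvd_or_dvd this).resolve_right hg
  obtain ⟨w, rfl⟩ := hxu
  have : x * (w * g + v * x) = x * a := by linear_combination huv
  exact mem_span_pair.mpr ⟨w, v, mul_left_cancel₀ hx.ne_zero this⟩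

end Ideal

open Ideal

section MulQuot

variable {R : Type*} [CommRing R] (g x : R)

def mulQuotSpanPair : (R ⧸ span {g, x}) →ₗ[R] (R ⧸ span {g, x ^ 2}) :=
  Submodule.mapQ _ _ (LinearMap.mulLeft R x) fun _ ha => mul_mem_span_pair_sq_of_mem ha

variable {g x}

@[simp]
theorem mulQuotSpanPair_mk (a : R) :
    mulQuotSpanPair g x (Submodule.Quotient.mk a) = Submodule.Quotient.mk (x * a) :=
  rfl

theorem mulQuotSpanPair_injective [IsDomain R] (hx : Prime x) (hg : ¬x ∣ g) :
    Function.Injective (mulQuotSpanPair g x) := by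
  rw [← LinearMap.ker_eq_bot, LinearMap.ker_eq_bot']
  rintro ⟨a⟩ ha
  rw [Submodule.Quotient.quot_mk_eq_mk, mulQuotSpanPair_mk,
    Submodule.Quotient.mk_eq_zero] at ha
  exact (Submodule.Quotient.mk_eq_zero _).mpr (mem_span_pair_of_mul_mem_span_pair_sq hx hg ha)

theorem range_mulQuotSpanPair :
    LinearMap.range (mulQuotSpanPair g x) =
      LinearMap.ker (Submodule.factor (span_pair_sq_le_span_pair (g := g) (x := x))) := by
  ext ⟨a⟩
  change _ ↔ (Submodule.Quotient.mk a : R ⧸ span {g, x}) = 0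
  rw [Submodule.Quotient.quot_mk_eq_mk, Submodule.Quotient.mk_eq_zero]
  constructor
  · rintro ⟨⟨b⟩, hb⟩
    rw [Submodule.Quotient.quot_mk_eq_mk, mulQuotSpanPair_mk,
      Submodule.Quotient.eq] at hb
    have hx : x * b ∈ span {g, x} := mul_mem_right b _ (subset_span (Set.mem_insert_of_mem _ rfl))
    simpa using sub_mem hx (span_pair_sq_le_span_pair hb)
  · intro ha
    obtain ⟨v, hv⟩ := exists_mul_sub_mem_span_pair_sq_of_mem ha
    exact ⟨Submodule.Quotient.mk v, (Submodule.Quotient.eq _).mpr hv⟩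

end MulQuot

theorem stmt_10_general (r : ℕ)
    (I J : Ideal (MvPolynomial (Fin 2) ℂ))
    (hIdef : I = Ideal.span {((X 0 : MvPolynomial (Fin 2) ℂ) - X 1) ^ r,
      (X 0 : MvPolynomial (Fin 2) ℂ)})
    (hJdef : J = Ideal.span {((X 0 : MvPolynomial (Fin 2) ℂ) - X 1) ^ r,
      (X 0 : MvPolynomial (Fin 2) ℂ) ^ 2}) :
    J ≤ I ∧
    ∃ (μ : (MvPolynomial (Fin 2) ℂ ⧸ I) →ₗ[MvPolynomial (Fin 2) ℂ]
            (MvPolynomial (Fin 2) ℂ ⧸ J))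
      (q : (MvPolynomial (Fin 2) ℂ ⧸ J) →ₗ[MvPolynomial (Fin 2) ℂ]
            (MvPolynomial (Fin 2) ℂ ⧸ I)),
      (∀ a : MvPolynomial (Fin 2) ℂ,
          μ (Ideal.Quotient.mk I a) = Ideal.Quotient.mk J (X 0 * a)) ∧
      (∀ a : MvPolynomial (Fin 2) ℂ,
          q (Ideal.Quotient.mk J a) = Ideal.Quotient.mk I a) ∧
      Function.Injective μ ∧
      LinearMap.range μ = LinearMap.ker q := by
  subst hIdef hJdef
  have hX : Prime (X 0 : MvPolynomial (Fin 2) ℂ) := X_prime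
  have hg : ¬(X 0 : MvPolynomial (Fin 2) ℂ) ∣ (X 0 - X 1) ^ r := fun h => by
    have := hX.dvd_of_dvd_pow h
    rw [dvd_sub_right dvd_rfl, X_dvd_X] at this
    exact absurd this (by decide)
  exact ⟨span_pair_sq_le_span_pair, mulQuotSpanPair _ _, Submodule.factor _,
    fun _ => rfl, fun _ => rfl, mulQuotSpanPair_injective hX hg, range_mulQuotSpanPair⟩

/-- Step (a) of the proof of Proposition 2.1: with `A = ℂ[x,y]`,
`I = ((x−y)^r, x)` and `J = ((x−y)^r, x²)`, multiplication by `x` induces a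
well-defined injective `A`-linear map `μ : A/I → A/J` whose range is the kernel of
the natural projection `q : A/J → A/I`; i.e. `0 → A/I → A/J → A/I → 0` is exact. -/
theorem stmt_10 (r : ℕ) (hr : 1 ≤ r)
    (I J : Ideal (MvPolynomial (Fin 2) ℂ))
    (hIdef : I = Ideal.span {((X 0 : MvPolynomial (Fin 2) ℂ) - X 1) ^ r,
      (X 0 : MvPolynomial (Fin 2) ℂ)})
    (hJdef : J = Ideal.span {((X 0 : MvPolynomial (Fin 2) ℂ) - X 1) ^ r,
      (X 0 : MvPolynomial (Fin 2) ℂ) ^ 2}) :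
    J ≤ I ∧
    ∃ (μ : (MvPolynomial (Fin 2) ℂ ⧸ I) →ₗ[MvPolynomial (Fin 2) ℂ]
            (MvPolynomial (Fin 2) ℂ ⧸ J))
      (q : (MvPolynomial (Fin 2) ℂ ⧸ J) →ₗ[MvPolynomial (Fin 2) ℂ]
            (MvPolynomial (Fin 2) ℂ ⧸ I)),
      (∀ a : MvPolynomial (Fin 2) ℂ,
          μ (Ideal.Quotient.mk I a) = Ideal.Quotient.mk J (X 0 * a)) ∧
      (∀ a : MvPolynomial (Fin 2) ℂ,
          q (Ideal.Quotient.mk J a) = Ideal.Quotient.mk I a) ∧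
      Function.Injective μ ∧
      LinearMap.range μ = LinearMap.ker q :=
  stmt_10_general r I J hIdef hJdef
end

section
/- Let r ≥ 1 and n ≥ 1 be natural numbers with n dividing r. Let A = ℂ[x,y] be the polynomial ring in two variables over ℂ, I the ideal generated by (x−y)^r and x, J the ideal generated by (x−y)^r and x², and q : A/J → A/I the natural projection (well-defined since J ⊆ I). Regard A/I and A/J as modules over the one-variable polynomial ring ℂ[s] via the ℂ-algebra homomorphism ℂ[s] → ℂ[x,y] sending s to y^n. Then q admits no ℂ[s]-linear section: there is no ℂ[s]-linear map σ : A/I → A/J with q ∘ σ = id on A/I. -/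
/-!
Since `n ∣ r`, the element `s ^ (r / n)` acts on both quotients as multiplication by `t = y ^ r`.
Now `t ∈ I` (as `y ≡ y - x` modulo `x`), so `t` kills `A/I`, while `t • I ⊆ I ^ 2 ⊆ J`. If `σ` were
a `ℂ[s]`-linear section and `f` a lift of `σ 1`, then `f - 1 ∈ I` and `t * f ∈ J`, whence
`t = t * f - t * (f - 1) ∈ J`. But `y ^ r ∉ J`: writing `y ^ r = a (x - y) ^ r + b x ^ 2` over
`ℂ[y]` and comparing the coefficients of `x ^ 0` and `x ^ 1` gives `y ^ (r + 1) ∣ r y ^ r`.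
-/

open MvPolynomial

theorem Ideal.Quotient.not_exists_section_factor {R A : Type*} [Semiring R] [CommRing A]
    (φ : R →+* A) {I J : Ideal A} (hJI : J ≤ I) (a : R) (haI : φ a ∈ I) (haJ : φ a ∉ J)
    (hmul : ∀ g ∈ I, φ a * g ∈ J) :
    letI := Module.compHom (A ⧸ I) φ
    letI := Module.compHom (A ⧸ J) φ
    ¬ ∃ σ : (A ⧸ I) →ₗ[R] (A ⧸ J), ∀ z, Ideal.Quotient.factor hJI (σ z) = z := by
  let := Module.compHom (A ⧸ I) φ
  let := Module.compHom (A ⧸ J) φ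
  rintro ⟨σ, hσ⟩
  obtain ⟨f, hf⟩ := Ideal.Quotient.mk_surjective (σ 1)
  have hf1 : f - 1 ∈ I := by
    rw [← Ideal.Quotient.eq, ← Ideal.Quotient.factor_mk hJI, hf, hσ, map_one]
  have hσa : σ (a • 1) = 0 := by
    rw [show a • (1 : A ⧸ I) = Ideal.Quotient.mk I (φ a) from
        (Algebra.smul_def (φ a) (1 : A ⧸ I)).trans (mul_one _),
      Ideal.Quotient.eq_zero_iff_mem.2 haI, map_zero]
  have haf : φ a * f ∈ J := by
    rw [← Ideal.Quotient.eq_zero_iff_mem, ← hσa, σ.map_smul, ← hf]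
    rfl
  have hsplit : φ a = φ a * f - φ a * (f - 1) := by ring
  exact haJ (hsplit ▸ J.sub_mem haf (hmul _ hf1))

theorem Ideal.span_pair_mul_span_pair_le {A : Type*} [CommSemiring A] (a b : A) :
    Ideal.span {a, b} * Ideal.span {a, b} ≤ Ideal.span {a, b ^ 2} := by
  rw [Ideal.span_mul_span', Ideal.span_le]
  rintro _ ⟨u, hu, v, hv, rfl⟩
  have ha : a ∈ Ideal.span {a, b ^ 2} := Ideal.subset_span (by simp)
  rcases hu with rfl | rfl <;> rcases hv with rfl | rfl
  · exact Ideal.mul_mem_left _ _ ha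
  · exact Ideal.mul_mem_right _ _ ha
  · exact Ideal.mul_mem_left _ _ ha
  · exact Ideal.subset_span (by simp [sq])

theorem Ideal.pow_mem_span_pow_sub_pair {A : Type*} [CommRing A] (a b : A) (r : ℕ) :
    b ^ r ∈ Ideal.span {(a - b) ^ r, a} := by
  have hb : a + -(a - b) = b := by ring
  refine hb ▸ Ideal.add_pow_mem_of_pow_mem_of_le _ (m := 1) (n := r) ?_ ?_ (by omega)
  · simpa using Ideal.subset_span (by simp)
  · rw [neg_pow]; exact Ideal.mul_mem_left _ _ (Ideal.subset_span (by simp))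

open Polynomial in
theorem Polynomial.pow_succ_dvd_of_C_mem_span {R : Type*} [CommRing R] {u c : R} {r : ℕ}
    (h : C c ∈ Ideal.span {(X - C u) ^ r, X ^ 2}) : u ^ (r + 1) ∣ r * c := by
  rcases r with _ | m
  · simp
  obtain ⟨a, b, hab⟩ := Ideal.mem_span_pair.1 h
  -- the values at `0` of a polynomial and of its derivative do not see the `X ^ 2` part
  have h0 : eval 0 a * (-u) ^ (m + 1) = c := by simpa using congrArg (eval 0) hab
  have h1 : eval 0 (derivative a) * (-u) ^ (m + 1) + eval 0 a * ((m + 1) * (-u) ^ m) = 0 := by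
    simpa [derivative_X_sub_C_pow] using congrArg (fun p => eval 0 (derivative p)) hab
  refine ⟨-(-1) ^ m * eval 0 (derivative a), ?_⟩
  rw [neg_pow u] at h0 h1
  push_cast
  linear_combination -(m + 1 : R) * h0 - u * h1

theorem MvPolynomial.X_one_pow_notMem_span {R : Type*} [CommRing R] {r : ℕ} (hr : (r : R) ≠ 0) :
    (X 1 : MvPolynomial (Fin 2) R) ^ r ∉ Ideal.span {(X 0 - X 1) ^ r, X 0 ^ 2} := by
  intro h
  have h' : Polynomial.C (Polynomial.X ^ r : Polynomial R) ∈
      Ideal.span {(Polynomial.X - Polynomial.C Polynomial.X) ^ r, Polynomial.X ^ 2} := by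
    simpa [Ideal.map_span, Set.image_pair] using
      Ideal.mem_map_of_mem (aeval ![Polynomial.X, Polynomial.C (Polynomial.X : Polynomial R)]) h
  have hcoeff := (Polynomial.X_pow_dvd_iff.1 (Polynomial.pow_succ_dvd_of_C_mem_span h')) r
    (Nat.lt_succ_self r)
  exact hr (by simpa using hcoeff)

theorem stmt_11_general (r n : ℕ) (hr : 1 ≤ r) (hdvd : n ∣ r)
    (I J : Ideal (MvPolynomial (Fin 2) ℂ))
    (hIdef : I = Ideal.span {((X 0 : MvPolynomial (Fin 2) ℂ) - X 1) ^ r,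
      (X 0 : MvPolynomial (Fin 2) ℂ)})
    (hJdef : J = Ideal.span {((X 0 : MvPolynomial (Fin 2) ℂ) - X 1) ^ r,
      (X 0 : MvPolynomial (Fin 2) ℂ) ^ 2})
    (hJI : J ≤ I) :
    letI : Module (Polynomial ℂ) (MvPolynomial (Fin 2) ℂ ⧸ I) :=
      Module.compHom _
        (Polynomial.aeval ((X 1 : MvPolynomial (Fin 2) ℂ) ^ n)).toRingHom
    letI : Module (Polynomial ℂ) (MvPolynomial (Fin 2) ℂ ⧸ J) :=
      Module.compHom _
        (Polynomial.aeval ((X 1 : MvPolynomial (Fin 2) ℂ) ^ n)).toRingHom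
    ¬ ∃ σ : (MvPolynomial (Fin 2) ℂ ⧸ I) →ₗ[Polynomial ℂ]
              (MvPolynomial (Fin 2) ℂ ⧸ J),
        ∀ z : MvPolynomial (Fin 2) ℂ ⧸ I,
          Ideal.Quotient.factor (S := J) (T := I) hJI (σ z) = z := by
  obtain ⟨k, rfl⟩ := hdvd
  subst hIdef hJdef
  have hφ : (Polynomial.aeval ((X 1 : MvPolynomial (Fin 2) ℂ) ^ n)).toRingHom
      (Polynomial.X ^ k : Polynomial ℂ) = X 1 ^ (n * k) := by
    simp [pow_mul]
  have hyI := Ideal.pow_mem_span_pow_sub_pair (X 0 : MvPolynomial (Fin 2) ℂ) (X 1) (n * k)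
  refine Ideal.Quotient.not_exists_section_factor _ hJI (Polynomial.X ^ k) (hφ ▸ hyI)
    (hφ ▸ X_one_pow_notMem_span (Nat.cast_ne_zero.2 (by omega))) fun g hg ↦ ?_
  exact hφ ▸ Ideal.span_pair_mul_span_pair_le _ _ (Ideal.mul_mem_mul hyI hg)

/-- Step (a) of Proposition 2.1 combined with Corollary 2.5: regarding
`A/I` and `A/J` (`A = ℂ[x,y]`, `I = ((x−y)^r, x)`, `J = ((x−y)^r, x²)`) as
`ℂ[s]`-modules via `s ↦ y^n` (where `n ∣ r`), the natural projection
`q : A/J → A/I` admits no `ℂ[s]`-linear section. -/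
theorem stmt_11 (r n : ℕ) (hr : 1 ≤ r) (hn : 1 ≤ n) (hdvd : n ∣ r)
    (I J : Ideal (MvPolynomial (Fin 2) ℂ))
    (hIdef : I = Ideal.span {((X 0 : MvPolynomial (Fin 2) ℂ) - X 1) ^ r,
      (X 0 : MvPolynomial (Fin 2) ℂ)})
    (hJdef : J = Ideal.span {((X 0 : MvPolynomial (Fin 2) ℂ) - X 1) ^ r,
      (X 0 : MvPolynomial (Fin 2) ℂ) ^ 2})
    (hJI : J ≤ I) :
    letI : Module (Polynomial ℂ) (MvPolynomial (Fin 2) ℂ ⧸ I) :=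
      Module.compHom _
        (Polynomial.aeval ((X 1 : MvPolynomial (Fin 2) ℂ) ^ n)).toRingHom
    letI : Module (Polynomial ℂ) (MvPolynomial (Fin 2) ℂ ⧸ J) :=
      Module.compHom _
        (Polynomial.aeval ((X 1 : MvPolynomial (Fin 2) ℂ) ^ n)).toRingHom
    ¬ ∃ σ : (MvPolynomial (Fin 2) ℂ ⧸ I) →ₗ[Polynomial ℂ]
              (MvPolynomial (Fin 2) ℂ ⧸ J),
        ∀ z : MvPolynomial (Fin 2) ℂ ⧸ I,
          Ideal.Quotient.factor (S := J) (T := I) hJI (σ z) = z :=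
  stmt_11_general r n hr hdvd I J hIdef hJdef hJI
end

section
/- Let r ≥ 1. The quotient ring M₂ = ℂ[x,y] ⧸ ((x−y)^r, x²), regarded as a module over the ring ℂ[ε] = ℂ[t]/(t²) of dual numbers via the ℂ-algebra homomorphism ℂ[t]/(t²) → M₂ sending the class of t to the class of x, is a free ℂ[ε]-module of rank r; indeed the images of 1, y, y², …, y^(r−1) form a ℂ[ε]-basis. -/
/-!
Over `R = k[t]/(p)` with `ε` the class of `t`, sending `x ↦ ε` and `y ↦ Y` identifies
`k[x,y]/((x - y)^n, p(x))` with `R[Y]/((Y - ε)^n)`: the relation `p(x) = 0` is absorbed into the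
coefficient ring, and `(x - y)^n` becomes the monic polynomial `(Y - ε)^n` of degree `n`, whose
quotient has the power basis `1, Y, …, Y^(n-1)`.
-/

open MvPolynomial

noncomputable section

namespace ThickDiagonal

variable {k : Type*} [CommRing k] (p : Polynomial k) (n : ℕ)

abbrev Base : Type _ := Polynomial k ⧸ Ideal.span {p}

def ε : Base p := Ideal.Quotient.mk _ Polynomial.X

def ideal : Ideal (MvPolynomial (Fin 2) k) :=
  Ideal.span {(X 0 - X 1) ^ n, Polynomial.aeval (X 0) p}

abbrev CoordRing : Type _ := MvPolynomial (Fin 2) k ⧸ ideal p n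

def relation : Polynomial (Base p) := (Polynomial.X - Polynomial.C (ε p)) ^ n

lemma monic_relation : (relation p n).Monic := (Polynomial.monic_X_sub_C _).pow n

lemma natDegree_relation [Nontrivial (Base p)] : (relation p n).natDegree = n := by
  rw [relation, (Polynomial.monic_X_sub_C _).natDegree_pow, Polynomial.natDegree_X_sub_C, mul_one]

lemma aeval_ε : Polynomial.aeval (ε p) p = 0 := by
  rw [ε, ← Ideal.Quotient.mkₐ_eq_mk k, Polynomial.aeval_algHom_apply,
    Polynomial.aeval_X_left_apply, Ideal.Quotient.mkₐ_eq_mk, Ideal.Quotient.eq_zero_iff_mem]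
  exact Ideal.mem_span_singleton_self p

lemma root_sub_ε_pow :
    (AdjoinRoot.root (relation p n) - AdjoinRoot.of _ (ε p)) ^ n = 0 := by
  have := AdjoinRoot.eval₂_root (relation p n)
  rwa [relation, Polynomial.eval₂_pow, Polynomial.eval₂_sub, Polynomial.eval₂_X,
    Polynomial.eval₂_C] at this

lemma ideal_le_ker_aeval :
    ideal p n ≤
      RingHom.ker (aeval ![AdjoinRoot.of _ (ε p), AdjoinRoot.root (relation p n)]) := by
  rw [ideal, Ideal.span_le, Set.insert_subset_iff, Set.singleton_subset_iff]
  constructor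
  · show aeval _ _ = 0
    rw [map_pow, map_sub, aeval_X, aeval_X, ← neg_sub, neg_pow]
    simp [root_sub_ε_pow]
  · show aeval _ (Polynomial.aeval (X 0) p) = 0
    rw [← Polynomial.aeval_algHom_apply, aeval_X]
    show Polynomial.aeval (AdjoinRoot.ofAlgHom k (relation p n) (ε p)) p = 0
    rw [Polynomial.aeval_algHom_apply, aeval_ε, map_zero]

def toAdjoinRoot : CoordRing p n →ₐ[k] AdjoinRoot (relation p n) :=
  Ideal.Quotient.liftₐ _ _ fun _ ha => RingHom.mem_ker.mp (ideal_le_ker_aeval p n ha)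

lemma toAdjoinRoot_mk_X_zero :
    toAdjoinRoot p n (Ideal.Quotient.mk _ (X 0)) = AdjoinRoot.of _ (ε p) :=
  aeval_X _ 0

lemma toAdjoinRoot_mk_X_one :
    toAdjoinRoot p n (Ideal.Quotient.mk _ (X 1)) = AdjoinRoot.root _ :=
  aeval_X _ 1

section

variable [Algebra (Base p) (CoordRing p n)]
  (hε : algebraMap (Base p) (CoordRing p n) (ε p) = Ideal.Quotient.mk _ (X 0))

include hε in
lemma eval₂_relation :
    (relation p n).eval₂ (algebraMap _ (CoordRing p n)) (Ideal.Quotient.mk _ (X 1)) = 0 := by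
  rw [relation, Polynomial.eval₂_pow, Polynomial.eval₂_sub, Polynomial.eval₂_X,
    Polynomial.eval₂_C, hε, ← map_sub, ← map_pow, Ideal.Quotient.eq_zero_iff_mem, ← neg_sub,
    neg_pow]
  exact Ideal.mul_mem_left _ _ (Ideal.subset_span (Set.mem_insert _ _))

def ofAdjoinRoot : AdjoinRoot (relation p n) →ₐ[Base p] CoordRing p n :=
  AdjoinRoot.liftAlgHom _ (Algebra.ofId _ _) _ (eval₂_relation p n hε)

lemma ofAdjoinRoot_root : ofAdjoinRoot p n hε (AdjoinRoot.root _) = Ideal.Quotient.mk _ (X 1) :=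
  AdjoinRoot.liftAlgHom_root ..

lemma ofAdjoinRoot_of (s : Base p) : ofAdjoinRoot p n hε (AdjoinRoot.of _ s) = algebraMap _ _ s :=
  AdjoinRoot.liftAlgHom_of ..

variable [IsScalarTower k (Base p) (CoordRing p n)]

lemma toAdjoinRoot_comp_ofAdjoinRoot :
    (toAdjoinRoot p n).comp ((ofAdjoinRoot p n hε).restrictScalars k) = AlgHom.id k _ := by
  apply AdjoinRoot.algHom_ext'
  · apply Ideal.Quotient.algHom_ext
    apply Polynomial.algHom_ext
    change toAdjoinRoot p n (ofAdjoinRoot p n hε (AdjoinRoot.of _ (ε p))) = AdjoinRoot.of _ (ε p)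
    rw [ofAdjoinRoot_of, hε, toAdjoinRoot_mk_X_zero]
  · simp [ofAdjoinRoot_root, toAdjoinRoot_mk_X_one]

lemma ofAdjoinRoot_comp_toAdjoinRoot :
    ((ofAdjoinRoot p n hε).restrictScalars k).comp (toAdjoinRoot p n) = AlgHom.id k _ := by
  apply Ideal.Quotient.algHom_ext
  apply MvPolynomial.algHom_ext
  intro i
  fin_cases i
  · simp [ofAdjoinRoot_of, hε, toAdjoinRoot_mk_X_zero]
  · simp [ofAdjoinRoot_root, toAdjoinRoot_mk_X_one]

def adjoinRootEquiv : AdjoinRoot (relation p n) ≃ₐ[Base p] CoordRing p n :=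
  AlgEquiv.ofBijective (ofAdjoinRoot p n hε) <| Function.bijective_iff_has_inverse.mpr
    ⟨toAdjoinRoot p n, AlgHom.congr_fun (toAdjoinRoot_comp_ofAdjoinRoot p n hε),
      AlgHom.congr_fun (ofAdjoinRoot_comp_toAdjoinRoot p n hε)⟩

def powerBasis : PowerBasis (Base p) (CoordRing p n) :=
  (AdjoinRoot.powerBasis' (monic_relation p n)).map (adjoinRootEquiv p n hε)

include hε in
theorem exists_basis_mk_X_one_pow [Nontrivial (Base p)] :
    ∃ b : Module.Basis (Fin n) (Base p) (CoordRing p n),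
      ∀ i : Fin n, b i = Ideal.Quotient.mk _ (X 1 ^ (i : ℕ)) := by
  let pb := powerBasis p n hε
  refine ⟨pb.basis.reindex (finCongr (natDegree_relation p n)), fun i => ?_⟩
  rw [Module.Basis.reindex_apply, pb.basis_eq_pow, map_pow]
  exact congrArg (· ^ (i : ℕ)) (ofAdjoinRoot_root p n hε)

end

end ThickDiagonal

end

theorem stmt_13_general (r : ℕ)
    (J : Ideal (MvPolynomial (Fin 2) ℂ))
    (hJdef : J = Ideal.span {((X 0 : MvPolynomial (Fin 2) ℂ) - X 1) ^ r,
      (X 0 : MvPolynomial (Fin 2) ℂ) ^ 2})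
    (ψ : (Polynomial ℂ ⧸ Ideal.span {(Polynomial.X : Polynomial ℂ) ^ 2}) →ₐ[ℂ]
          (MvPolynomial (Fin 2) ℂ ⧸ J))
    (hψ : ψ (Ideal.Quotient.mk (Ideal.span {(Polynomial.X : Polynomial ℂ) ^ 2})
            Polynomial.X)
          = Ideal.Quotient.mk J (X 0)) :
    letI : Module (Polynomial ℂ ⧸ Ideal.span {(Polynomial.X : Polynomial ℂ) ^ 2})
        (MvPolynomial (Fin 2) ℂ ⧸ J) :=
      Module.compHom _ ψ.toRingHom
    ∃ b : Module.Basis (Fin r) (Polynomial ℂ ⧸ Ideal.span {(Polynomial.X : Polynomial ℂ) ^ 2})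
        (MvPolynomial (Fin 2) ℂ ⧸ J),
      ∀ i : Fin r,
        b i = Ideal.Quotient.mk J ((X 1 : MvPolynomial (Fin 2) ℂ) ^ (i : ℕ)) := by
  obtain rfl : J = ThickDiagonal.ideal (Polynomial.X ^ 2) r := by simp [hJdef, ThickDiagonal.ideal]
  let M := ThickDiagonal.CoordRing (Polynomial.X ^ 2 : Polynomial ℂ) r
  let R := Polynomial ℂ ⧸ Ideal.span {(Polynomial.X : Polynomial ℂ) ^ 2}
  -- its module structure is definitionally `Module.compHom _ ψ.toRingHom`
  let _ : Algebra R M := ψ.toRingHom.toAlgebra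
  have : IsScalarTower ℂ R M :=
    IsScalarTower.of_algebraMap_eq (R := ℂ) (S := R) (A := M) fun c => (ψ.commutes c).symm
  have : Nontrivial R := Ideal.Quotient.nontrivial_iff.mpr <| by
    rw [Ne, Ideal.span_singleton_eq_top]
    exact (isUnit_pow_iff two_ne_zero).not.mpr Polynomial.not_isUnit_X
  exact ThickDiagonal.exists_basis_mk_X_one_pow (Polynomial.X ^ 2) r (hε := hψ)

/-- Step (a) of Proposition 2.1: `M₂ = ℂ[x,y]/((x−y)^r, x²)`, as a module over the
dual numbers `ℂ[ε] = ℂ[t]/(t²)` via the `ℂ`-algebra map sending the class of `t` to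
the class of `x`, is free of rank `r` with basis the images of `1, y, …, y^(r−1)`. -/
theorem stmt_13 (r : ℕ) (hr : 1 ≤ r)
    (J : Ideal (MvPolynomial (Fin 2) ℂ))
    (hJdef : J = Ideal.span {((X 0 : MvPolynomial (Fin 2) ℂ) - X 1) ^ r,
      (X 0 : MvPolynomial (Fin 2) ℂ) ^ 2})
    (ψ : (Polynomial ℂ ⧸ Ideal.span {(Polynomial.X : Polynomial ℂ) ^ 2}) →ₐ[ℂ]
          (MvPolynomial (Fin 2) ℂ ⧸ J))
    (hψ : ψ (Ideal.Quotient.mk (Ideal.span {(Polynomial.X : Polynomial ℂ) ^ 2})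
            Polynomial.X)
          = Ideal.Quotient.mk J (X 0)) :
    letI : Module (Polynomial ℂ ⧸ Ideal.span {(Polynomial.X : Polynomial ℂ) ^ 2})
        (MvPolynomial (Fin 2) ℂ ⧸ J) :=
      Module.compHom _ ψ.toRingHom
    ∃ b : Module.Basis (Fin r) (Polynomial ℂ ⧸ Ideal.span {(Polynomial.X : Polynomial ℂ) ^ 2})
        (MvPolynomial (Fin 2) ℂ ⧸ J),
      ∀ i : Fin r,
        b i = Ideal.Quotient.mk J ((X 1 : MvPolynomial (Fin 2) ℂ) ^ (i : ℕ)) :=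
  stmt_13_general r J hJdef ψ hψ
end

section
/- Let r ≥ 1. The images of the 2r elements 1, y, …, y^(r−1), x, x·y, …, x·y^(r−1) in the quotient ring ℂ[x,y] ⧸ ((x−y)^r, x²) form a basis of this quotient as a ℂ-vector space; in particular its dimension over ℂ equals 2r. -/
/-!
In the coordinates `ε = x`, `t = y - x` the ring is the ring of dual numbers over
`R[t]/(t^r)`. The `2r` classes `y^i`, `x y^i` span it: their span contains `1` and is
stable under multiplication by `x` and `y`, because `x² = 0` and expanding `(y - x)^r = 0`
gives `y^r = r x y^(r-1)`. Conversely, `x ↦ ε`, `y ↦ t + ε` maps the quotient onto those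
dual numbers, which are free of rank `2r`. A spanning family of `finrank` many vectors is
a basis.
-/

open MvPolynomial DualNumber TrivSqZeroExt

theorem sub_pow_succ_of_sq_eq_zero {A : Type*} [CommRing A] {a : A} (ha : a ^ 2 = 0) (b : A)
    (n : ℕ) : (b - a) ^ (n + 1) = b ^ (n + 1) - (n + 1) • (a * b ^ n) := by
  induction n with
  | zero => simp
  | succ n ih =>
    rw [pow_succ, ih]
    linear_combination ((n + 1 : A) * b ^ n) * ha

theorem Algebra.adjoin_toSubmodule_le_of_mul_mem {R A : Type*} [CommSemiring R] [Semiring A]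
    [Algebra R A] {s : Set A} {S : Submodule R A} (h1 : 1 ∈ S)
    (hmul : ∀ x ∈ s, ∀ y ∈ S, x * y ∈ S) :
    Subalgebra.toSubmodule (Algebra.adjoin R s) ≤ S := by
  rw [Algebra.adjoin_toSubmodule_le]
  intro m hm
  induction hm using Submonoid.closure_induction_left with
  | one => exact h1
  | mul_left x hx y _ hy => exact hmul x hx y hy

theorem adjoin_toSubmodule_le_span_of_sq_eq_zero {R A : Type*} [CommSemiring R] [CommRing A]
    [Algebra R A] {a b : A} {r : ℕ} (ha : a ^ 2 = 0) (hab : (a - b) ^ r = 0) :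
    Subalgebra.toSubmodule (Algebra.adjoin R {a, b}) ≤
      Submodule.span R (Set.range (Sum.elim (fun i : Fin r => b ^ (i : ℕ))
        fun i : Fin r => a * b ^ (i : ℕ))) := by
  set S := Submodule.span R (Set.range (Sum.elim (fun i : Fin r => b ^ (i : ℕ))
    fun i : Fin r => a * b ^ (i : ℕ)))
  rcases r with _ | n
  · have : Subsingleton A := subsingleton_of_zero_eq_one (by simpa using hab.symm)
    intro x _
    simp [Subsingleton.elim x 0]
  have pow_mem (i : ℕ) (hi : i < n + 1) : b ^ i ∈ S :=
    Submodule.subset_span ⟨.inl ⟨i, hi⟩, rfl⟩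
  have mul_pow_mem (i : ℕ) (hi : i < n + 1) : a * b ^ i ∈ S :=
    Submodule.subset_span ⟨.inr ⟨i, hi⟩, rfl⟩
  have hb : b ^ (n + 1) = (n + 1) • (a * b ^ n) := by
    have hba : (b - a) ^ (n + 1) = 0 := by rw [← neg_sub, neg_pow, hab, mul_zero]
    linear_combination (sub_pow_succ_of_sq_eq_zero ha b n).symm + hba
  refine Algebra.adjoin_toSubmodule_le_of_mul_mem (pow_zero b ▸ pow_mem 0 n.succ_pos) ?_
  rintro x (rfl | rfl) y hy <;>
    refine (Submodule.span_le (p := S.comap (LinearMap.mulLeft R _))).2 ?_ hy <;>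
    rintro _ ⟨i | i, rfl⟩ <;>
    simp only [SetLike.mem_coe, Submodule.mem_comap, LinearMap.mulLeft_apply, Sum.elim_inl,
      Sum.elim_inr]
  · exact mul_pow_mem i i.2
  · rw [← mul_assoc, ← sq, ha, zero_mul]
    exact S.zero_mem
  · rw [← pow_succ']
    rcases Nat.lt_or_ge (i + 1) (n + 1) with hi | hi
    · exact pow_mem _ hi
    · rw [show (i : ℕ) + 1 = n + 1 by omega, hb]
      exact S.nsmul_mem (mul_pow_mem n n.lt_succ_self) _
  · rw [mul_left_comm, ← pow_succ']
    rcases Nat.lt_or_ge (i + 1) (n + 1) with hi | hi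
    · exact mul_pow_mem _ hi
    · rw [show (i : ℕ) + 1 = n + 1 by omega, hb, mul_smul_comm, ← mul_assoc, ← sq, ha,
        zero_mul, smul_zero]
      exact S.zero_mem

theorem MvPolynomial.adjoin_mk_X_eq_top {R : Type*} [CommRing R]
    (I : Ideal (MvPolynomial (Fin 2) R)) :
    Algebra.adjoin R {Ideal.Quotient.mk I (X 0), Ideal.Quotient.mk I (X 1)} = ⊤ := by
  have hsurj := Ideal.Quotient.mkₐ_surjective R I
  rw [← (AlgHom.range_eq_top _).2 hsurj, ← Algebra.map_top, ← adjoin_range_X,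
    AlgHom.map_adjoin, ← Set.range_comp]
  congr 1
  ext
  simp [Fin.exists_fin_two, eq_comm]

noncomputable section

variable (R : Type*) [CommRing R] (r : ℕ)

abbrev thickDiagIdeal : Ideal (MvPolynomial (Fin 2) R) :=
  Ideal.span {(X 0 - X 1) ^ r, X 0 ^ 2}

abbrev thickDiagMonomial : Fin r ⊕ Fin r → MvPolynomial (Fin 2) R :=
  Sum.elim (fun i => X 1 ^ (i : ℕ)) fun i => X 0 * X 1 ^ (i : ℕ)

theorem top_le_span_range_thickDiagMonomial :
    ⊤ ≤ Submodule.span R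
      (Set.range (Ideal.Quotient.mk (thickDiagIdeal R r) ∘ thickDiagMonomial R r)) := by
  have hx : Ideal.Quotient.mk (thickDiagIdeal R r) (X 0) ^ 2 = 0 := by
    rw [← map_pow, Ideal.Quotient.eq_zero_iff_mem]
    exact Ideal.subset_span (by simp)
  have hxy : (Ideal.Quotient.mk (thickDiagIdeal R r) (X 0) -
      Ideal.Quotient.mk (thickDiagIdeal R r) (X 1)) ^ r = 0 := by
    rw [← map_sub, ← map_pow, Ideal.Quotient.eq_zero_iff_mem]
    exact Ideal.subset_span (by simp)
  have := adjoin_toSubmodule_le_span_of_sq_eq_zero (R := R) hx hxy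
  rw [adjoin_mk_X_eq_top, Algebra.top_toSubmodule] at this
  have hv : Ideal.Quotient.mk (thickDiagIdeal R r) ∘ thickDiagMonomial R r =
      Sum.elim (fun i : Fin r => Ideal.Quotient.mk _ (X 1) ^ (i : ℕ))
        (fun i : Fin r => Ideal.Quotient.mk _ (X 0) * Ideal.Quotient.mk _ (X 1) ^ (i : ℕ)) := by
    ext (i | i) <;> simp
  rw [hv]
  exact this

abbrev thickDiagToDualNumber :
    MvPolynomial (Fin 2) R →ₐ[R] (AdjoinRoot (Polynomial.X ^ r : Polynomial R))[ε] :=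
  aeval ![ε, inl (AdjoinRoot.root _) + ε]

theorem thickDiagToDualNumber_surjective : Function.Surjective (thickDiagToDualNumber R r) := by
  rw [← AlgHom.range_eq_top, eq_top_iff, ← range_inlAlgHom_sup_adjoin_eps, sup_le_iff]
  have hε : ε ∈ (thickDiagToDualNumber R r).range := ⟨X 0, by simp⟩
  have hroot : inl (AdjoinRoot.root _) ∈ (thickDiagToDualNumber R r).range :=
    ⟨X 1 - X 0, by simp⟩
  constructor
  · rw [← Algebra.map_top, ← AdjoinRoot.adjoinRoot_eq_top, AlgHom.map_adjoin,
      Set.image_singleton]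
    exact Algebra.adjoin_le (Set.singleton_subset_iff.2 hroot)
  · exact Algebra.adjoin_le (Set.singleton_subset_iff.2 hε)

theorem thickDiagIdeal_le_ker : thickDiagIdeal R r ≤ RingHom.ker (thickDiagToDualNumber R r) := by
  refine Ideal.span_le.2 ?_
  rintro _ (rfl | rfl)
  · have hroot : AdjoinRoot.root (Polynomial.X ^ r : Polynomial R) ^ r = 0 := by
      rw [← AdjoinRoot.mk_X, ← map_pow, AdjoinRoot.mk_self]
    have : thickDiagToDualNumber R r (X 0 - X 1) = inl (-AdjoinRoot.root _) := by
      simp only [map_sub, aeval_X, Matrix.cons_val_zero, Matrix.cons_val_one, inl_neg]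
      ring
    rw [SetLike.mem_coe, RingHom.mem_ker, map_pow, this, inl_pow, neg_pow, hroot, mul_zero,
      inl_zero]
  · simp [sq, eps_mul_eps]

theorem finrank_dualNumber_adjoinRoot_X_pow [Nontrivial R] :
    Module.finrank R (AdjoinRoot (Polynomial.X ^ r : Polynomial R))[ε] = 2 * r := by
  let pb := AdjoinRoot.powerBasis' (Polynomial.monic_X_pow (R := R) r)
  have := pb.finite
  have := Module.Free.of_basis pb.basis
  rw [show Module.finrank R (AdjoinRoot (Polynomial.X ^ r : Polynomial R))[ε] =
    Module.finrank R (AdjoinRoot (Polynomial.X ^ r : Polynomial R) ×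
      AdjoinRoot (Polynomial.X ^ r : Polynomial R)) from rfl]
  rw [Module.finrank_prod, pb.finrank, AdjoinRoot.powerBasis'_dim, Polynomial.natDegree_X_pow]
  ring

theorem finrank_quotient_thickDiagIdeal [Nontrivial R] :
    Module.finrank R (MvPolynomial (Fin 2) R ⧸ thickDiagIdeal R r) = 2 * r := by
  have hspan := top_le_span_range_thickDiagMonomial R r
  have : Module.Finite R (MvPolynomial (Fin 2) R ⧸ thickDiagIdeal R r) :=
    Module.finite_def.2 (eq_top_iff.2 hspan ▸ Submodule.fg_span (Set.finite_range _))
  apply le_antisymm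
  · calc Module.finrank R (MvPolynomial (Fin 2) R ⧸ thickDiagIdeal R r)
        = (Set.range (Ideal.Quotient.mk (thickDiagIdeal R r) ∘
            thickDiagMonomial R r)).finrank R := by
          rw [Set.finrank, eq_top_iff.2 hspan, finrank_top]
      _ ≤ Fintype.card (Fin r ⊕ Fin r) := finrank_range_le_card _
      _ = 2 * r := by simp [two_mul]
  · have hker : ∀ p ∈ thickDiagIdeal R r, thickDiagToDualNumber R r p = 0 :=
      fun _ hp => thickDiagIdeal_le_ker R r hp
    rw [← finrank_dualNumber_adjoinRoot_X_pow R r]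
    exact LinearMap.finrank_le_finrank_of_surjective
      (f := (Ideal.Quotient.liftₐ _ _ hker).toLinearMap)
      (Ideal.Quotient.lift_surjective_of_surjective _ hker (thickDiagToDualNumber_surjective R r))

end

theorem stmt_16_general (r : ℕ) :
    (∃ b : Module.Basis (Fin r ⊕ Fin r) ℂ
        (MvPolynomial (Fin 2) ℂ ⧸
          Ideal.span {((X 0 : MvPolynomial (Fin 2) ℂ) - X 1) ^ r,
            (X 0 : MvPolynomial (Fin 2) ℂ) ^ 2}),
      ∀ j : Fin r ⊕ Fin r,
        b j = Ideal.Quotient.mk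
          (Ideal.span {((X 0 : MvPolynomial (Fin 2) ℂ) - X 1) ^ r,
            (X 0 : MvPolynomial (Fin 2) ℂ) ^ 2})
          (Sum.elim
            (fun i : Fin r => (X 1 : MvPolynomial (Fin 2) ℂ) ^ (i : ℕ))
            (fun i : Fin r => (X 0 : MvPolynomial (Fin 2) ℂ) * X 1 ^ (i : ℕ)) j)) ∧
    Module.finrank ℂ
      (MvPolynomial (Fin 2) ℂ ⧸
        Ideal.span {((X 0 : MvPolynomial (Fin 2) ℂ) - X 1) ^ r,
          (X 0 : MvPolynomial (Fin 2) ℂ) ^ 2}) = 2 * r := by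
  have hrank := finrank_quotient_thickDiagIdeal ℂ r
  have hcard : Fintype.card (Fin r ⊕ Fin r) = Module.finrank ℂ
      (MvPolynomial (Fin 2) ℂ ⧸ thickDiagIdeal ℂ r) := by
    simp [hrank, two_mul]
  exact ⟨⟨basisOfTopLeSpanOfCardEqFinrank _ (top_le_span_range_thickDiagMonomial ℂ r) hcard,
    fun j => by simp⟩, hrank⟩

/-- Step (a) of Proposition 2.1: the images of `1, y, …, y^(r−1), x, x·y, …, x·y^(r−1)`
form a `ℂ`-basis of `M₂ = ℂ[x,y]/((x−y)^r, x²)`; in particular `dim_ℂ M₂ = 2r`. -/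
theorem stmt_16 (r : ℕ) (hr : 1 ≤ r) :
    (∃ b : Module.Basis (Fin r ⊕ Fin r) ℂ
        (MvPolynomial (Fin 2) ℂ ⧸
          Ideal.span {((X 0 : MvPolynomial (Fin 2) ℂ) - X 1) ^ r,
            (X 0 : MvPolynomial (Fin 2) ℂ) ^ 2}),
      ∀ j : Fin r ⊕ Fin r,
        b j = Ideal.Quotient.mk
          (Ideal.span {((X 0 : MvPolynomial (Fin 2) ℂ) - X 1) ^ r,
            (X 0 : MvPolynomial (Fin 2) ℂ) ^ 2})
          (Sum.elim
            (fun i : Fin r => (X 1 : MvPolynomial (Fin 2) ℂ) ^ (i : ℕ))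
            (fun i : Fin r => (X 0 : MvPolynomial (Fin 2) ℂ) * X 1 ^ (i : ℕ)) j)) ∧
    Module.finrank ℂ
      (MvPolynomial (Fin 2) ℂ ⧸
        Ideal.span {((X 0 : MvPolynomial (Fin 2) ℂ) - X 1) ^ r,
          (X 0 : MvPolynomial (Fin 2) ℂ) ^ 2}) = 2 * r :=
  stmt_16_general r
end
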